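/- (U_ε is a left inverse of T_ε, Prop. 6.2(iii).) Let ε > 0, fix a partition of (0,1) for the parameter ε, let 1 ≤ p ≤ ∞ and let φ ∈ L^p(R^ε). Then U_ε(T_ε(φ))(x,y) = φ(x,y) for almost every (x,y) ∈ R^ε. -/

import Mathlib

open MeasureTheory Set Filter Topology

noncomputable section

/-- The thin domain `R^ε = {(x,y) : x ∈ (0,1), 0 < y < ε G(x, x/ε)}`. -/
def thinDomain (G : ℝ → ℝ → ℝ) (ε : ℝ) : Set (ℝ × ℝ) :=
  {z : ℝ × ℝ | z.1 ∈ Ioo (0 : ℝ) 1 ∧ z.2 ∈ Ioo (0 : ℝ) (ε * G z.1 (z.1 / ε))}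

/-- The reference cell `Y* = (0,l₁) × (0,G₁)`. -/
def Ystar (l1 G1 : ℝ) : Set (ℝ × ℝ) := Ioo (0 : ℝ) l1 ×ˢ Ioo (0 : ℝ) G1

/-- A partition `0 = x₀ < x₁ < ⋯ < x_{N+1} = 1` of the interval `(0,1)` (for a parameter `ε`). -/
structure ThinPartition where
  N : ℕ
  pts : ℕ → ℝ
  pts_zero : pts 0 = 0
  pts_last : pts (N + 1) = 1
  pts_lt : ∀ k ≤ N, pts k < pts (k + 1)

/-- The index `k` such that `x ∈ [x_k, x_{k+1})` (for `x ∈ [0,1)`). -/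
def ThinPartition.idx (P : ThinPartition) (x : ℝ) : ℕ :=
  Nat.findGreatest (fun k => P.pts k ≤ x) P.N

/-- `[x]_ε`, the partition point just below `x`. -/
def ThinPartition.bracket (P : ThinPartition) (x : ℝ) : ℝ := P.pts (P.idx x)

/-- `Γ_{[x]_ε} = (x_{k+1} - x_k) / l(x_k)` for `x ∈ [x_k, x_{k+1})`. -/
def ThinPartition.Gamma (P : ThinPartition) (l : ℝ → ℝ) (x : ℝ) : ℝ :=
  (P.pts (P.idx x + 1) - P.pts (P.idx x)) / l (P.pts (P.idx x))

/-- The unfolding operator `T_ε` associated to a partition, acting on a function `φ` on `R^ε`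
(extended by zero to all of `ℝ²` via the indicator of `R^ε`). -/
def unfoldOp (G : ℝ → ℝ → ℝ) (l : ℝ → ℝ) (ε : ℝ) (P : ThinPartition)
    (φ : ℝ × ℝ → ℝ) : ℝ × ℝ × ℝ → ℝ := fun q =>
  if q.2.1 < l (P.bracket q.1) then
    (thinDomain G ε).indicator φ (P.bracket q.1 + P.Gamma l q.1 * q.2.1, ε * q.2.2)
  else 0

/-- The averaging operator `U_ε`, the formal adjoint of `T_ε`. -/
def avgOp (l : ℝ → ℝ) (ε : ℝ) (P : ThinPartition) (ψ : ℝ × ℝ × ℝ → ℝ) : ℝ × ℝ → ℝ := fun z =>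
  (1 / l (P.bracket z.1)) *
    ∫ y₁ in Ioo (0 : ℝ) (l (P.bracket z.1)),
      ψ (P.bracket z.1 + P.Gamma l z.1 * y₁, (z.1 - P.bracket z.1) / P.Gamma l z.1, z.2 / ε)

/-- The limit set `W = {(x,y₁,y₂) : x ∈ (0,1), 0 < y₁ < l(x), 0 < y₂ < G(x,y₁)}`. -/
def Wset (G : ℝ → ℝ → ℝ) (l : ℝ → ℝ) : Set (ℝ × ℝ × ℝ) :=
  {q | q.1 ∈ Ioo (0 : ℝ) 1 ∧ q.2.1 ∈ Ioo (0 : ℝ) (l q.1) ∧ q.2.2 ∈ Ioo (0 : ℝ) (G q.1 q.2.1)}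

/-- The set `W₀ = {(x,y₁) : x ∈ (0,1), 0 < y₁ < l(x)}`. -/
def W0set (l : ℝ → ℝ) : Set (ℝ × ℝ) :=
  {z : ℝ × ℝ | z.1 ∈ Ioo (0 : ℝ) 1 ∧ z.2 ∈ Ioo (0 : ℝ) (l z.1)}

/-!
The map `y₁ ↦ [x]_ε + Γ_{[x]_ε} y₁` sends `(0, l([x]_ε))` into the partition cell of `x`, on
which `[·]_ε` and `Γ` are constant.  So in `U_ε(T_ε φ)(x,y)` the unfolding evaluates `φ` at
`([x]_ε + Γ (x - [x]_ε)/Γ, ε · y/ε) = (x,y)` whatever `y₁` is: the integrand is the constant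
`φ(x,y)`, which the average returns.  Openness of `R^ε` is needed only to know that almost every
point for the measure restricted to `R^ε` lies in `R^ε`.
-/

namespace ThinPartition

variable (P : ThinPartition) {l : ℝ → ℝ} {x y : ℝ} {k : ℕ}

theorem strictMonoOn_pts : StrictMonoOn P.pts (Iic (P.N + 1)) :=
  strictMonoOn_Iic_of_lt_succ fun k hk => P.pts_lt k (Nat.lt_succ_iff.mp hk)

theorem pts_mem_Icc (hk : k ≤ P.N + 1) : P.pts k ∈ Icc 0 1 := by
  rw [← P.pts_zero, ← P.pts_last]
  exact ⟨P.strictMonoOn_pts.monotoneOn (Nat.zero_le _) hk (Nat.zero_le k),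
    P.strictMonoOn_pts.monotoneOn hk (mem_Iic.mpr le_rfl) hk⟩

theorem idx_le : P.idx x ≤ P.N := Nat.findGreatest_le _

theorem bracket_mem_Icc : P.bracket x ∈ Icc 0 1 :=
  P.pts_mem_Icc (P.idx_le.trans (Nat.le_succ _))

theorem lt_pts_idx_succ (hx : x < 1) : x < P.pts (P.idx x + 1) := by
  rcases (P.idx_le (x := x)).eq_or_lt with h | h
  · rwa [h, P.pts_last]
  · by_contra! hle
    exact Nat.findGreatest_is_greatest (Nat.lt_succ_self _) h hle

theorem idx_eq_of_mem_Ico (hk : k ≤ P.N) (hx : x ∈ Ico (P.pts k) (P.pts (k + 1))) :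
    P.idx x = k := by
  refine Nat.findGreatest_eq_iff.mpr ⟨hk, fun _ => hx.1, fun n hkn hn hnx => ?_⟩
  have : P.pts (k + 1) ≤ P.pts n :=
    P.strictMonoOn_pts.monotoneOn (Nat.succ_le_succ hk) (Nat.le_succ_of_le hn) hkn
  linarith [hx.2]

theorem bracket_eq_of_idx_eq {x' : ℝ} (h : P.idx x' = P.idx x) : P.bracket x' = P.bracket x :=
  congrArg P.pts h

theorem Gamma_eq_of_idx_eq {x' : ℝ} (h : P.idx x' = P.idx x) : P.Gamma l x' = P.Gamma l x := by
  simp only [Gamma, h]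

theorem Gamma_mul_l (hl : l (P.bracket x) ≠ 0) :
    P.Gamma l x * l (P.bracket x) = P.pts (P.idx x + 1) - P.bracket x :=
  div_mul_cancel₀ _ hl

theorem Gamma_pos (hl : 0 < l (P.bracket x)) : 0 < P.Gamma l x :=
  div_pos (sub_pos.mpr (P.pts_lt _ P.idx_le)) hl

theorem idx_bracket_add_Gamma_mul (hl : 0 < l (P.bracket x)) (hy : y ∈ Ico 0 (l (P.bracket x))) :
    P.idx (P.bracket x + P.Gamma l x * y) = P.idx x := by
  have hΓ := P.Gamma_pos hl
  refine P.idx_eq_of_mem_Ico P.idx_le ⟨?_, ?_⟩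
  · exact le_add_of_nonneg_right (mul_nonneg hΓ.le hy.1)
  · have := mul_lt_mul_of_pos_left hy.2 hΓ
    rw [P.Gamma_mul_l hl.ne'] at this
    unfold bracket at this ⊢
    linarith

theorem div_Gamma_lt_l (hl : 0 < l (P.bracket x)) (hx : x < 1) :
    (x - P.bracket x) / P.Gamma l x < l (P.bracket x) := by
  rw [div_lt_iff₀ (P.Gamma_pos hl), mul_comm, P.Gamma_mul_l hl.ne']
  linarith [P.lt_pts_idx_succ hx]

end ThinPartition

open ThinPartition

theorem isOpen_thinDomain {G : ℝ → ℝ → ℝ} (ε : ℝ)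
    (hG : ContinuousOn (fun z : ℝ × ℝ => G z.1 z.2) (Ioo 0 1 ×ˢ (univ : Set ℝ))) :
    IsOpen (thinDomain G ε) := by
  let f : ℝ × ℝ → ℝ × ℝ := fun z => (z.2, ε * G z.1 (z.1 / ε))
  have hf : ContinuousOn f (Ioo 0 1 ×ˢ univ) :=
    continuous_snd.continuousOn.prodMk <| continuousOn_const.mul <|
      hG.comp (continuous_fst.prodMk (continuous_fst.div_const ε)).continuousOn
        fun z hz => ⟨hz.1, mem_univ _⟩
  have hopen : IsOpen {w : ℝ × ℝ | 0 < w.1 ∧ w.1 < w.2} :=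
    (isOpen_lt continuous_const continuous_fst).inter (isOpen_lt continuous_fst continuous_snd)
  convert hf.isOpen_inter_preimage (isOpen_Ioo.prod isOpen_univ) hopen using 1
  ext z
  simp [thinDomain, f]

theorem unfoldOp_apply_cell {G : ℝ → ℝ → ℝ} {l : ℝ → ℝ} {ε : ℝ} {P : ThinPartition}
    {φ : ℝ × ℝ → ℝ} {x y y₁ : ℝ} (hx : x < 1) (hl : 0 < l (P.bracket x)) (hε : ε ≠ 0)
    (hy₁ : y₁ ∈ Ico 0 (l (P.bracket x))) :
    unfoldOp G l ε P φ (P.bracket x + P.Gamma l x * y₁, (x - P.bracket x) / P.Gamma l x, y / ε) =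
      (thinDomain G ε).indicator φ (x, y) := by
  have hidx := P.idx_bracket_add_Gamma_mul hl hy₁
  have hΓ := (P.Gamma_pos hl).ne'
  simp only [unfoldOp, P.bracket_eq_of_idx_eq hidx, P.Gamma_eq_of_idx_eq hidx,
    if_pos (P.div_Gamma_lt_l hl hx), mul_div_cancel₀ _ hΓ, mul_div_cancel₀ _ hε, add_sub_cancel]

theorem avgOp_unfoldOp_apply {G : ℝ → ℝ → ℝ} {l : ℝ → ℝ} {ε : ℝ} {P : ThinPartition}
    {φ : ℝ × ℝ → ℝ} {z : ℝ × ℝ} (hx : z.1 < 1) (hl : 0 < l (P.bracket z.1))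
    (hε : ε ≠ 0) :
    avgOp l ε P (unfoldOp G l ε P φ) z = (thinDomain G ε).indicator φ z := by
  have hconst : EqOn (fun y₁ => unfoldOp G l ε P φ (P.bracket z.1 + P.Gamma l z.1 * y₁,
      (z.1 - P.bracket z.1) / P.Gamma l z.1, z.2 / ε)) (fun _ => (thinDomain G ε).indicator φ z)
      (Ioo 0 (l (P.bracket z.1))) :=
    fun y₁ hy₁ => unfoldOp_apply_cell hx hl hε (Ioo_subset_Ico_self hy₁)
  rw [avgOp, setIntegral_congr_fun measurableSet_Ioo hconst, setIntegral_const,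
    Real.volume_real_Ioo_of_le hl.le, sub_zero, smul_eq_mul, ← mul_assoc,
    one_div_mul_cancel hl.ne', one_mul]

theorem averaging_left_inverse_unfolding_general
    (l0 l1 : ℝ) (hl0 : 0 < l0)
    (l : ℝ → ℝ)
    (hlb : ∀ x ∈ Icc (0 : ℝ) 1, l0 ≤ l x ∧ l x < l1)
    (G : ℝ → ℝ → ℝ)
    (hGcont : ContinuousOn (fun z : ℝ × ℝ => G z.1 z.2) (Ioo 0 1 ×ˢ (univ : Set ℝ)))
    (ε : ℝ) (hε : 0 < ε) (P : ThinPartition)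
    (φ : ℝ × ℝ → ℝ) :
    ∀ᵐ z ∂volume.restrict (thinDomain G ε),
      avgOp l ε P (unfoldOp G l ε P φ) z = φ z := by
  filter_upwards [ae_restrict_mem (isOpen_thinDomain ε hGcont).measurableSet] with z hz
  have hl : 0 < l (P.bracket z.1) := hl0.trans_le (hlb _ P.bracket_mem_Icc).1
  rw [avgOp_unfoldOp_apply hz.1.2 hl hε.ne', indicator_of_mem hz]

/-- `U_ε` is a left inverse of `T_ε` (Prop. 6.2(iii)). -/
theorem averaging_left_inverse_unfolding
    (l0 l1 G0 G1 : ℝ) (hl0 : 0 < l0) (hl01 : l0 < l1) (hG0 : 0 < G0) (hG01 : G0 ≤ G1)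
    (l : ℝ → ℝ) (hlC1 : ContDiffOn ℝ 1 l (Ioo 0 1))
    (hlb : ∀ x ∈ Icc (0 : ℝ) 1, l0 ≤ l x ∧ l x < l1)
    (G : ℝ → ℝ → ℝ)
    (hGcont : ContinuousOn (fun z : ℝ × ℝ => G z.1 z.2) (Ioo 0 1 ×ˢ (univ : Set ℝ)))
    (hGb : ∀ x ∈ Ioo (0 : ℝ) 1, ∀ y : ℝ, G0 ≤ G x y ∧ G x y ≤ G1)
    (hGper : ∀ x ∈ Ioo (0 : ℝ) 1, ∀ y : ℝ, G x (y + l x) = G x y)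
    (ε : ℝ) (hε : 0 < ε) (P : ThinPartition)
    (p : ENNReal) (hp : 1 ≤ p)
    (φ : ℝ × ℝ → ℝ) (hφ : MemLp φ p (volume.restrict (thinDomain G ε))) :
    ∀ᵐ z ∂volume.restrict (thinDomain G ε),
      avgOp l ε P (unfoldOp G l ε P φ) z = φ z :=
  averaging_left_inverse_unfolding_general l0 l1 hl0 l hlb G hGcont ε hε P φ
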